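/- Let K_i ∈ ℝ^{(m_i+…+m_N)×n} and L_i ∈ ℝ^{n×(p_1+…+p_i)} (i = 1,…,N) be arbitrary gains. For j ∈ {1,…,N}, let T_j ∈ ℝ^{n×(N+1)n} be the block row with −I_n in block j, I_n in block N+1, and zeros elsewhere. Then for every j and every s ∈ ℂ not in the spectrum of 𝒜, T_j (sI − 𝒜)^{-1} ℒ_j = 0. (Interpreting the j-th controller state block x^{K_j} and the plant state x, this says the transfer function from the innovation channel ℒ_j to x − x^{K_j} vanishes identically: the controller is certainty-equivalent, x^{K_j} acting as the estimate of the plant state based on y_{↑j}.) -/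

import Mathlib

open Matrix

namespace TriLQG

noncomputable section

variable {N : ℕ}

/-- Index type of an `(N+1)`-block partitioned coordinate space with block sizes `d`. -/
abbrev Idx {N : ℕ} (d : Fin (N+1) → ℕ) : Type := Σ k : Fin (N+1), Fin (d k)

/-- Indices belonging to blocks `i, i+1, …, N`. -/
abbrev IdxGe {N : ℕ} (d : Fin (N+1) → ℕ) (i : Fin (N+1)) : Type := {x : Idx d // i ≤ x.1}

/-- Indices belonging to blocks `0, 1, …, i`. -/
abbrev IdxLe {N : ℕ} (d : Fin (N+1) → ℕ) (i : Fin (N+1)) : Type := {x : Idx d // x.1 ≤ i}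

/-- The selector matrix `E^{↓i}` (columns of the identity for blocks `i,…,N`). -/
def padGe (d : Fin (N+1) → ℕ) (i : Fin (N+1)) : Matrix (Idx d) (IdxGe d i) ℝ :=
  Matrix.of fun r c => if r = (c : Idx d) then 1 else 0

/-- The selector matrix `E^{↑i}` (columns of the identity for blocks `0,…,i`). -/
def padLe (d : Fin (N+1) → ℕ) (i : Fin (N+1)) : Matrix (Idx d) (IdxLe d i) ℝ :=
  Matrix.of fun r c => if r = (c : Idx d) then 1 else 0

/-- Complexification of a real matrix. -/
def mc {α β : Type*} (M : Matrix α β ℝ) : Matrix α β ℂ := M.map Complex.ofReal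

/-- A real square matrix is Hurwitz if its (complex) spectrum lies in the open left half plane. -/
def IsHurwitz {t : Type*} [Fintype t] [DecidableEq t] (M : Matrix t t ℝ) : Prop :=
  ∀ z ∈ spectrum ℂ (mc M), z.re < 0

open Classical in
/-- The (unique, symmetric, positive semidefinite) square root of a positive semidefinite
real matrix; junk value `0` if the matrix is not positive semidefinite. -/
def msqrt {t : Type*} [Fintype t] [DecidableEq t] (M : Matrix t t ℝ) : Matrix t t ℝ :=
  if h : M.PosSemidef then
    h.1.eigenvectorUnitary.1 * diagonal (Real.sqrt ∘ h.1.eigenvalues) *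
      (star h.1.eigenvectorUnitary : Matrix t t ℝ)
  else 0

/-- Full column rank. -/
def FullColRank {α β : Type*} [Fintype β] {R : Type*} [CommRing R] (M : Matrix α β R) : Prop :=
  M.rank = Fintype.card β

/-- Full row rank. -/
def FullRowRank {α β : Type*} [Fintype α] [Fintype β] {R : Type*} [CommRing R]
    (M : Matrix α β R) : Prop :=
  M.rank = Fintype.card α

/-- `ARE_p(Ã,B̃,F̃,H̃)` together with its gain: `X` is a symmetric solution of the
control algebraic Riccati equation and `K` is the associated gain. -/
def AREp {n' m' q' : Type*} [Fintype n'] [Fintype m'] [Fintype q'] [DecidableEq m']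
    (At : Matrix n' n' ℝ) (Bt : Matrix n' m' ℝ) (Ft : Matrix q' n' ℝ) (Ht : Matrix q' m' ℝ)
    (X : Matrix n' n' ℝ) (K : Matrix m' n' ℝ) : Prop :=
  X.IsSymm ∧
  Atᵀ * X + X * At - (X * Bt + Ftᵀ * Ht) * (Htᵀ * Ht)⁻¹ * (X * Bt + Ftᵀ * Ht)ᵀ + Ftᵀ * Ft = 0 ∧
  K = -((Htᵀ * Ht)⁻¹ * (X * Bt + Ftᵀ * Ht)ᵀ)

/-- `ARE_d(Ã,C̃,W̃,Ṽ)` together with its gain. -/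
def AREd {n' p' r' : Type*} [Fintype n'] [Fintype p'] [Fintype r'] [DecidableEq p']
    (At : Matrix n' n' ℝ) (Ct : Matrix p' n' ℝ) (Wt : Matrix n' r' ℝ) (Vt : Matrix p' r' ℝ)
    (Y : Matrix n' n' ℝ) (L : Matrix n' p' ℝ) : Prop :=
  Y.IsSymm ∧
  At * Y + Y * Atᵀ - (Ct * Y + Vt * Wtᵀ)ᵀ * (Vt * Vtᵀ)⁻¹ * (Ct * Y + Vt * Wtᵀ) + Wt * Wtᵀ = 0 ∧
  L = -((Ct * Y + Vt * Wtᵀ)ᵀ * (Vt * Vtᵀ)⁻¹)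

/-- Lower block triangular sparsity. -/
def IsLBT {N : ℕ} {d e : Fin (N+1) → ℕ} (M : Matrix (Idx d) (Idx e) ℝ) : Prop :=
  ∀ a : Idx d, ∀ b : Idx e, a.1 < b.1 → M a b = 0

/-- The data of the `(N+1)`-player triangular plant. -/
structure Plant (N : ℕ) where
  nd : Fin (N+1) → ℕ
  md : Fin (N+1) → ℕ
  pd : Fin (N+1) → ℕ
  q : ℕ
  r : ℕ
  A : Matrix (Idx nd) (Idx nd) ℝ
  B : Matrix (Idx nd) (Idx md) ℝ
  C : Matrix (Idx pd) (Idx nd) ℝ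
  F : Matrix (Fin q) (Idx nd) ℝ
  H : Matrix (Fin q) (Idx md) ℝ
  W : Matrix (Idx nd) (Fin r) ℝ
  V : Matrix (Idx pd) (Fin r) ℝ

variable (P : Plant N)

/-- family of controller gains `K_i ∈ ℝ^{(m_i+⋯+m_N)×n}` -/
abbrev KGains (P : Plant N) : Type := (i : Fin (N+1)) → Matrix (IdxGe P.md i) (Idx P.nd) ℝ

/-- family of observer gains `L_i ∈ ℝ^{n×(p_1+⋯+p_i)}` -/
abbrev LGains (P : Plant N) : Type := (i : Fin (N+1)) → Matrix (Idx P.nd) (IdxLe P.pd i) ℝ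

/-- family of symmetric matrices `X_i` (or `Y_i`) -/
abbrev SFam (P : Plant N) : Type := Fin (N+1) → Matrix (Idx P.nd) (Idx P.nd) ℝ

def Bdown (i : Fin (N+1)) : Matrix (Idx P.nd) (IdxGe P.md i) ℝ := P.B.submatrix id Subtype.val
def Hdown (i : Fin (N+1)) : Matrix (Fin P.q) (IdxGe P.md i) ℝ := P.H.submatrix id Subtype.val
def Cup (i : Fin (N+1)) : Matrix (IdxLe P.pd i) (Idx P.nd) ℝ := P.C.submatrix Subtype.val id
def Vup (i : Fin (N+1)) : Matrix (IdxLe P.pd i) (Fin P.r) ℝ := P.V.submatrix Subtype.val id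

/-- `Ψ_{↓i}^{↓i} = (H^{↓i})ᵀ H^{↓i}` -/
def Psidd (i : Fin (N+1)) : Matrix (IdxGe P.md i) (IdxGe P.md i) ℝ := (Hdown P i)ᵀ * Hdown P i

/-- `Φ_{↑j}^{↑j} = V_{↑j} (V_{↑j})ᵀ` -/
def Phiuu (j : Fin (N+1)) : Matrix (IdxLe P.pd j) (IdxLe P.pd j) ℝ := Vup P j * (Vup P j)ᵀ

/-- The coupled Riccati system (2a)–(2d) of the paper. -/
def Coupled (X : SFam P) (K : KGains P) (Y : SFam P) (L : LGains P) : Prop :=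
  AREp P.A (Bdown P 0) P.F (Hdown P 0) (X 0) (K 0) ∧
  (∀ t : Fin N,
    AREp (P.A + L t.castSucc * Cup P t.castSucc) (Bdown P t.succ)
      (-(Hdown P t.castSucc * K t.castSucc)) (Hdown P t.succ) (X t.succ) (K t.succ)) ∧
  AREd P.A (Cup P (Fin.last N)) P.W (Vup P (Fin.last N)) (Y (Fin.last N)) (L (Fin.last N)) ∧
  (∀ t : Fin N,
    AREd (P.A + Bdown P t.succ * K t.succ) (Cup P t.castSucc)
      (-(L t.succ * Vup P t.succ)) (Vup P t.castSucc) (Y t.castSucc) (L t.castSucc))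

/-- `A^{KL}_{k+1,k}` for `k = 0, 1, …, N+1` (`k = 0` gives `A+BK_1`,
`k = N+1` gives `A+L_N C`). -/
def AKL (K : KGains P) (L : LGains P) (k : Fin (N+2)) : Matrix (Idx P.nd) (Idx P.nd) ℝ :=
  if hk : k.1 < N + 1 then
    (if k.1 = 0 then P.A + Bdown P 0 * K 0
     else
       have h1 : k.1 - 1 < N + 1 := by omega
       P.A + Bdown P ⟨k.1, hk⟩ * K ⟨k.1, hk⟩ +
         L ⟨k.1 - 1, h1⟩ * Cup P ⟨k.1 - 1, h1⟩)
  else P.A + L (Fin.last N) * Cup P (Fin.last N)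

/-- index set of the `n(N+1)`-dimensional controller state space -/
abbrev CtrIx {N : ℕ} (nd : Fin (N+1) → ℕ) : Type := Fin (N+1) × Idx nd

/-- index set of the `n(N+2)`-dimensional closed-loop state space:
`N+1` controller blocks and one plant block -/
abbrev BigIx {N : ℕ} (nd : Fin (N+1) → ℕ) : Type := CtrIx nd ⊕ Idx nd

/-- the incidence matrix `ζ` -/
def zetaN (nd : Fin (N+1) → ℕ) : Matrix (CtrIx nd) (CtrIx nd) ℝ :=
  Matrix.of fun x y => if y.1 ≤ x.1 ∧ x.2 = y.2 then 1 else 0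

/-- block diagonal matrix -/
def blkDiagN {nd : Fin (N+1) → ℕ} (f : Fin (N+1) → Matrix (Idx nd) (Idx nd) ℝ) :
    Matrix (CtrIx nd) (CtrIx nd) ℝ :=
  Matrix.of fun x y => if x.1 = y.1 then f x.1 x.2 y.2 else 0

/-- `A_K` of the optimal controller realization -/
def AK (K : KGains P) (L : LGains P) : Matrix (CtrIx P.nd) (CtrIx P.nd) ℝ :=
  blkDiagN (fun _ => P.A) + blkDiagN (fun k => L k * Cup P k) +
    zetaN P.nd * blkDiagN (fun k => Bdown P k * K k) * (zetaN P.nd)⁻¹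

/-- `B_K` of the optimal controller realization -/
def BK (L : LGains P) : Matrix (CtrIx P.nd) (Idx P.pd) ℝ :=
  Matrix.of fun x c => -((L x.1 * (padLe P.pd x.1)ᵀ) x.2 c)

/-- `C_K` of the optimal controller realization -/
def CK (K : KGains P) : Matrix (Idx P.md) (CtrIx P.nd) ℝ :=
  (Matrix.of fun rr (x : CtrIx P.nd) => (padGe P.md x.1 * K x.1) rr x.2) * (zetaN P.nd)⁻¹

/-- closed-loop `𝒜` -/
def Acal (K : KGains P) (L : LGains P) : Matrix (BigIx P.nd) (BigIx P.nd) ℝ :=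
  Matrix.fromBlocks (AK P K L) (BK P L * P.C) (P.B * CK P K) P.A

/-- closed-loop `ℬ` -/
def Bcal : Matrix (BigIx P.nd) (Idx P.md) ℝ :=
  Matrix.of fun x j => Sum.elim (fun _ => (0:ℝ)) (fun a => P.B a j) x

/-- closed-loop `𝒲` -/
def Wcal (L : LGains P) : Matrix (BigIx P.nd) (Fin P.r) ℝ :=
  Matrix.of fun x j => Sum.elim (fun y => (BK P L * P.V) y j) (fun a => P.W a j) x

/-- closed-loop `ℱ` -/
def Fcal (K : KGains P) : Matrix (Fin P.q) (BigIx P.nd) ℝ :=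
  Matrix.of fun i x => Sum.elim (fun y => (P.H * CK P K) i y) (fun a => P.F i a) x

/-- closed-loop `𝒞` -/
def Ccal : Matrix (Idx P.pd) (BigIx P.nd) ℝ :=
  Matrix.of fun i x => Sum.elim (fun _ => (0:ℝ)) (fun a => P.C i a) x

/-- block index of a closed-loop index -/
def blkOf {nd : Fin (N+1) → ℕ} (x : BigIx nd) : Fin (N+2) :=
  Sum.elim (fun y => y.1.castSucc) (fun _ => Fin.last (N+1)) x

/-- within-block state of a closed-loop index -/
def stOf {nd : Fin (N+1) → ℕ} (x : BigIx nd) : Idx nd :=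
  Sum.elim Prod.snd id x

/-- the incidence matrix `ζ̄` of the `(N+2)`-fold block structure -/
def zetaBar (nd : Fin (N+1) → ℕ) : Matrix (BigIx nd) (BigIx nd) ℝ :=
  Matrix.of fun x y => if blkOf y ≤ blkOf x ∧ stOf x = stOf y then 1 else 0

/-- embedding of a within-block index into the closed-loop index set, at block `k` -/
def emb {nd : Fin (N+1) → ℕ} (k : Fin (N+2)) (a : Idx nd) : BigIx nd :=
  if h : k.1 < N + 1 then Sum.inl (⟨⟨k.1, h⟩, a⟩ : CtrIx nd) else Sum.inr a

/-- `𝒦_i` of the paper (eq. (9)). -/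
def Kcal (K : KGains P) (i : Fin (N+1)) : Matrix (IdxGe P.md i) (BigIx P.nd) ℝ :=
  (padGe P.md i)ᵀ *
    Matrix.of fun (rr : Idx P.md) (x : BigIx P.nd) =>
      Sum.elim
        (fun y : CtrIx P.nd =>
          if hl : y.1.1 < N then
            (if y.1 < i then (0:ℝ)
             else
               have h1 : y.1.1 + 1 < N + 1 := by omega
               (padGe P.md ⟨y.1.1 + 1, h1⟩ * K ⟨y.1.1 + 1, h1⟩ -
                   padGe P.md y.1 * K y.1) rr y.2)
          else (-(padGe P.md (Fin.last N) * K (Fin.last N))) rr y.2)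
        (fun a => (padGe P.md i * K i) rr a) x

/-- `ℒ_j` of the paper (eq. (10)). -/
def Lcal (L : LGains P) (j : Fin (N+1)) : Matrix (BigIx P.nd) (IdxLe P.pd j) ℝ :=
  Matrix.of fun x c =>
    Sum.elim
      (fun y : CtrIx P.nd =>
        if y.1 < j then (L y.1 * (padLe P.pd y.1)ᵀ * padLe P.pd j) y.2 c else (L j) y.2 c)
      (fun a => (L j) a c) x

/-- `J̃_i` of the paper (eq. (11)). -/
def Jtil (nd : Fin (N+1) → ℕ) (i : Fin (N+1)) : Matrix (Idx nd) (BigIx nd) ℝ :=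
  Matrix.of fun a x =>
    Sum.elim
      (fun y : CtrIx nd => if 0 < i.1 ∧ y.1.1 = i.1 - 1 ∧ a = y.2 then (1:ℝ) else 0)
      (fun b => if a = b then (-1:ℝ) else 0) x

/-- `Ĵ_j` of the paper (eq. (11)). -/
def Jhat (nd : Fin (N+1) → ℕ) (j : Fin (N+1)) : Matrix (BigIx nd) (Idx nd) ℝ :=
  Matrix.of fun x a =>
    Sum.elim
      (fun y : CtrIx nd => if j < y.1 ∧ y.2 = a then (1:ℝ) else 0)
      (fun b => if b = a then (1:ℝ) else 0) x

/-- `Γ_i = −(Ψ_{↓i}^{↓i})^{1/2} 𝒦_i` for `i ≥ 1` (Lemma 2 of the paper). -/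
def Gam (K : KGains P) (i : Fin (N+1)) : Matrix (IdxGe P.md i) (BigIx P.nd) ℝ :=
  -(msqrt (Psidd P i) * Kcal P K i)

/-- `Λ_j = −ℒ_j (Φ_{↑j}^{↑j})^{1/2}` for `j ≤ N` (Lemma 2 of the paper). -/
def Lam (L : LGains P) (j : Fin (N+1)) : Matrix (BigIx P.nd) (IdxLe P.pd j) ℝ :=
  -(Lcal P L j * msqrt (Phiuu P j))

/-- the inner factor `U_1(s)` -/
def Uone (K : KGains P) (L : LGains P) (s : ℂ) : Matrix (Fin P.q) (IdxGe P.md 0) ℂ :=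
  mc (P.F + Hdown P 0 * K 0) * (s • 1 - mc (AKL P K L 0))⁻¹ * mc (Bdown P 0) *
      (mc (msqrt (Psidd P 0)))⁻¹ +
    mc (Hdown P 0) * (mc (msqrt (Psidd P 0)))⁻¹

/-- the inner factor `U_{t+2}(s)` (paper indexing), mapping block level `t+1` to `t` -/
def Usucc (K : KGains P) (L : LGains P) (t : Fin N) (s : ℂ) :
    Matrix (IdxGe P.md t.castSucc) (IdxGe P.md t.succ) ℂ :=
  mc (msqrt (Psidd P t.castSucc)) *
      mc ((padGe P.md t.castSucc)ᵀ *
        (padGe P.md t.succ * K t.succ - padGe P.md t.castSucc * K t.castSucc)) *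
      (s • 1 - mc (AKL P K L t.succ.castSucc))⁻¹ * mc (Bdown P t.succ) *
      (mc (msqrt (Psidd P t.succ)))⁻¹ +
    mc (msqrt (Psidd P t.castSucc)) * mc ((padGe P.md t.castSucc)ᵀ * padGe P.md t.succ) *
      (mc (msqrt (Psidd P t.succ)))⁻¹

/-- the co-inner factor `V_{N+1}(s)` (paper indexing: the last one) -/
def Vlast (K : KGains P) (L : LGains P) (s : ℂ) :
    Matrix (IdxLe P.pd (Fin.last N)) (Fin P.r) ℂ :=
  (mc (msqrt (Phiuu P (Fin.last N))))⁻¹ * mc (Cup P (Fin.last N)) *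
      (s • 1 - mc (AKL P K L (Fin.last (N+1))))⁻¹ *
      mc (P.W + L (Fin.last N) * Vup P (Fin.last N)) +
    (mc (msqrt (Phiuu P (Fin.last N))))⁻¹ * mc (Vup P (Fin.last N))

/-- the co-inner factor `V_{t+1}(s)` (paper indexing), for `t+1 ≤ N` -/
def Vmid (K : KGains P) (L : LGains P) (t : Fin N) (s : ℂ) :
    Matrix (IdxLe P.pd t.castSucc) (IdxLe P.pd t.succ) ℂ :=
  (mc (msqrt (Phiuu P t.castSucc)))⁻¹ * mc (Cup P t.castSucc) *
      (s • 1 - mc (AKL P K L t.succ.castSucc))⁻¹ *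
      mc ((L t.castSucc * (padLe P.pd t.castSucc)ᵀ - L t.succ * (padLe P.pd t.succ)ᵀ) *
        padLe P.pd t.succ * msqrt (Phiuu P t.succ)) +
    (mc (msqrt (Phiuu P t.castSucc)))⁻¹ *
      mc ((padLe P.pd t.castSucc)ᵀ * padLe P.pd t.succ * msqrt (Phiuu P t.succ))

/-- the product `U_1(s) U_2(s) ⋯ U_i(s)` -/
def Uprod (K : KGains P) (L : LGains P) (s : ℂ) :
    (i : Fin (N+1)) → Matrix (Fin P.q) (IdxGe P.md i) ℂ :=
  Fin.induction (motive := fun i => Matrix (Fin P.q) (IdxGe P.md i) ℂ)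
    (Uone P K L s) (fun t ih => ih * Usucc P K L t s)

/-- the product `V_j(s) V_{j+1}(s) ⋯ V_{N+1}(s)` -/
def Vprod (K : KGains P) (L : LGains P) (s : ℂ) :
    (j : Fin (N+1)) → Matrix (IdxLe P.pd j) (Fin P.r) ℂ :=
  Fin.reverseInduction (motive := fun j => Matrix (IdxLe P.pd j) (Fin P.r) ℂ)
    (Vlast P K L s) (fun t ih => Vmid P K L t s * ih)

/-- closed-loop transfer function `G11(s) = ℱ(sI−𝒜)⁻¹𝒲` -/
def G11 (K : KGains P) (L : LGains P) (s : ℂ) : Matrix (Fin P.q) (Fin P.r) ℂ :=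
  mc (Fcal P K) * (s • 1 - mc (Acal P K L))⁻¹ * mc (Wcal P L)

/-- closed-loop transfer function `G12(s) = ℱ(sI−𝒜)⁻¹ℬ + H` -/
def G12 (K : KGains P) (L : LGains P) (s : ℂ) : Matrix (Fin P.q) (Idx P.md) ℂ :=
  mc (Fcal P K) * (s • 1 - mc (Acal P K L))⁻¹ * mc (Bcal P) + mc P.H

/-- closed-loop transfer function `G21(s) = 𝒞(sI−𝒜)⁻¹𝒲 + V` -/
def G21 (K : KGains P) (L : LGains P) (s : ℂ) : Matrix (Idx P.pd) (Fin P.r) ℂ :=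
  mc (Ccal P) * (s • 1 - mc (Acal P K L))⁻¹ * mc (Wcal P L) + mc P.V

end

end TriLQG

namespace TriLQG

/-- `T_j`: the block row with `−I_n` in (controller) block `j`, `I_n` in the plant block
and zeros elsewhere, so that `T_j` applied to the closed-loop state gives `x − x^{K_j}`. -/
def Tmat (nd : Fin (N+1) → ℕ) (j : Fin (N+1)) : Matrix (Idx nd) (BigIx nd) ℝ :=
  Matrix.of fun a x =>
    Sum.elim
      (fun y : CtrIx nd => if y.1 = j ∧ a = y.2 then (-1 : ℝ) else 0)
      (fun b => if a = b then (1 : ℝ) else 0) x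

end TriLQG

/-!
Let `𝒱_j` be the space of closed-loop states whose controller blocks `j, …` all equal the
plant state. `T_j` vanishes on `𝒱_j` and the columns of `ℒ_j` lie in it. `𝒱_j` is
`𝒜`-invariant: for `k ≥ j` the observer terms `L_k C_{↑k} (x^{K_k} - x)` vanish, and the
control term of block `k` is block `k` of `ζ D μ x_K` with `D` block diagonal; as `μ x_K`
vanishes beyond block `j` and `ζ` takes partial sums over blocks, this term is the same for all
`k ≥ j`, in particular for the last block, where it is the plant's `B C_K x_K`. An invertible
matrix maps an invariant subspace of a finite-dimensional space onto itself, so `(sI - 𝒜)⁻¹`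
preserves `𝒱_j` too.
-/

theorem Matrix.exists_nonsing_inv_mul_eq_mul {K n : Type*} [Field K] [Fintype n] [DecidableEq n]
    {B Q : Matrix n n K} (hB : IsUnit B) (hBQ : ∃ C, B * Q = Q * C) :
    ∃ D, B⁻¹ * Q = Q * D := by
  obtain ⟨C, hC⟩ := hBQ
  set W := LinearMap.range (LinearMap.mulLeft K Q)
  have hW : ∀ X ∈ W, B * X ∈ W := by
    rintro _ ⟨Y, rfl⟩
    exact ⟨C * Y, by simp [← Matrix.mul_assoc, hC]⟩
  let f : W →ₗ[K] W := (LinearMap.mulLeft K B).restrict hW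
  have hf : Function.Injective f := fun X Y hXY =>
    Subtype.ext (hB.mul_left_cancel (congrArg Subtype.val hXY))
  obtain ⟨⟨_, D, rfl⟩, hD⟩ :=
    LinearMap.injective_iff_surjective.mp hf ⟨Q, Q.mul_one ▸ ⟨1, rfl⟩⟩
  have hBQD : B * (Q * D) = Q := congrArg Subtype.val hD
  refine ⟨D, ?_⟩
  conv_lhs => rw [← hBQD]
  exact B.nonsing_inv_mul_cancel_left _ ((B.isUnit_iff_isUnit_det).mp hB)

namespace TriLQG

lemma mc_mul {α β γ : Type*} [Fintype β] (M : Matrix α β ℝ) (M' : Matrix β γ ℝ) :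
    mc (M * M') = mc M * mc M' :=
  Matrix.map_mul (f := Complex.ofRealHom)

section Zeta

variable {N : ℕ} {nd : Fin (N+1) → ℕ}

lemma zetaN_mulVec_apply (η : CtrIx nd → ℝ) (k : Fin (N+1)) (a : Idx nd) :
    (zetaN nd *ᵥ η) (k, a) = ∑ l ∈ Finset.Iic k, η (l, a) := by
  simp only [mulVec, dotProduct, zetaN, ite_and, of_apply, ite_mul, one_mul, zero_mul,
    Fintype.sum_prod_type, Finset.sum_ite_irrel, Finset.sum_ite_eq, Finset.mem_univ, if_true,
    Finset.sum_const_zero]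
  rw [← Finset.sum_filter, Finset.filter_ge_eq_Iic]

lemma zetaN_mulVec_succ (η : CtrIx nd → ℝ) (t : Fin N) (a : Idx nd) :
    (zetaN nd *ᵥ η) (t.succ, a) = (zetaN nd *ᵥ η) (t.castSucc, a) + η (t.succ, a) := by
  have hIio : Finset.Iio t.succ = Finset.Iic t.castSucc := by
    ext l
    simp [Fin.lt_def, Fin.le_def]
  rw [zetaN_mulVec_apply, zetaN_mulVec_apply, ← Finset.Iio_insert,
    Finset.sum_insert Finset.notMem_Iio_self, hIio, add_comm]

def IsConstFrom (j : Fin (N+1)) (ξ : CtrIx nd → ℝ) : Prop :=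
  ∀ l, j ≤ l → ∀ a, ξ (l, a) = ξ (j, a)

lemma isConstFrom_zetaN_mulVec_iff {j : Fin (N+1)} {η : CtrIx nd → ℝ} :
    IsConstFrom j (zetaN nd *ᵥ η) ↔ ∀ l, j < l → ∀ a, η (l, a) = 0 := by
  constructor
  · intro h l hjl a
    obtain ⟨t, rfl⟩ := Fin.exists_succ_eq.mpr (Fin.ne_zero_of_lt hjl)
    have hstep := zetaN_mulVec_succ η t a
    rw [h _ hjl.le, h _ (Fin.le_castSucc_iff.mpr hjl)] at hstep
    linarith
  · intro h l hjl a
    rw [zetaN_mulVec_apply, zetaN_mulVec_apply]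
    refine (Finset.sum_subset (Finset.Iic_subset_Iic.mpr hjl) fun m _ hm => h m ?_ a).symm
    simpa using hm

lemma isUnit_zetaN : IsUnit (zetaN nd) := by
  refine mulVec_injective_iff_isUnit.mp fun η₁ η₂ h => sub_eq_zero.mp ?_
  have h0 : zetaN nd *ᵥ (η₁ - η₂) = 0 := by rw [mulVec_sub, h, sub_self]
  have hvanish := (isConstFrom_zetaN_mulVec_iff (j := 0)).mp fun l _ a => by rw [h0]; rfl
  funext ⟨l, a⟩
  rcases eq_or_ne l 0 with rfl | hl
  · have h00 := congrFun h0 (0, a)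
    rwa [zetaN_mulVec_apply, ← bot_eq_zero, Finset.Iic_bot, Finset.sum_singleton] at h00
  · exact hvanish l (Fin.pos_iff_ne_zero.mpr hl) a

lemma blkDiagN_mulVec_apply (f : Fin (N+1) → Matrix (Idx nd) (Idx nd) ℝ) (η : CtrIx nd → ℝ)
    (k : Fin (N+1)) (a : Idx nd) :
    (blkDiagN f *ᵥ η) (k, a) = (f k *ᵥ fun b => η (k, b)) a := by
  simp [mulVec, dotProduct, blkDiagN, Fintype.sum_prod_type, ite_mul]

lemma IsConstFrom.zetaN_mul_blkDiagN_mul_inv_mulVec {j : Fin (N+1)} {ξ : CtrIx nd → ℝ}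
    (hξ : IsConstFrom j ξ) (f : Fin (N+1) → Matrix (Idx nd) (Idx nd) ℝ) :
    IsConstFrom j ((zetaN nd * blkDiagN f * (zetaN nd)⁻¹) *ᵥ ξ) := by
  have hη : zetaN nd *ᵥ ((zetaN nd)⁻¹ *ᵥ ξ) = ξ := by
    rw [mulVec_mulVec, mul_nonsing_inv _ ((isUnit_iff_isUnit_det _).mp isUnit_zetaN), one_mulVec]
  rw [← hη, isConstFrom_zetaN_mulVec_iff] at hξ
  rw [← mulVec_mulVec, ← mulVec_mulVec, isConstFrom_zetaN_mulVec_iff]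
  intro l hl a
  have hblock : (fun b => ((zetaN nd)⁻¹ *ᵥ ξ) (l, b)) = 0 := funext (hξ l hl)
  rw [blkDiagN_mulVec_apply, hblock, mulVec_zero, Pi.zero_apply]

end Zeta

section ClosedLoop

variable {N : ℕ}

lemma mul_padGe {α : Type*} {d : Fin (N+1) → ℕ} (M : Matrix α (Idx d) ℝ) (i : Fin (N+1)) :
    M * padGe d i = M.submatrix id Subtype.val := by
  ext x c
  simp [mul_apply, padGe]

lemma padLe_transpose_mul {α : Type*} {d : Fin (N+1) → ℕ} (M : Matrix (Idx d) α ℝ)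
    (i : Fin (N+1)) : (padLe d i)ᵀ * M = M.submatrix Subtype.val id := by
  ext c x
  simp [mul_apply, padLe]

lemma zetaN_mul_blkDiagN_apply {nd : Fin (N+1) → ℕ}
    (f : Fin (N+1) → Matrix (Idx nd) (Idx nd) ℝ) (k l : Fin (N+1)) (a b : Idx nd) :
    (zetaN nd * blkDiagN f) (k, a) (l, b) = if l ≤ k then f l a b else 0 := by
  simp [mul_apply, zetaN, blkDiagN, Fintype.sum_prod_type, ite_and]

variable (P : Plant N)

lemma B_mul_CK (K : KGains P) :
    P.B * CK P K =
      (zetaN P.nd * blkDiagN (fun k => Bdown P k * K k) * (zetaN P.nd)⁻¹).submatrix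
        (fun a => (Fin.last N, a)) id := by
  have hBE : P.B * Matrix.of (fun r (x : CtrIx P.nd) => (padGe P.md x.1 * K x.1) r x.2) =
      (zetaN P.nd * blkDiagN (fun k => Bdown P k * K k)).submatrix
        (fun a => (Fin.last N, a)) id := by
    ext a ⟨l, b⟩
    rw [submatrix_apply, id_eq, zetaN_mul_blkDiagN_apply, if_pos (Fin.le_last l), Bdown,
      ← mul_padGe, Matrix.mul_assoc]
    rfl
  rw [CK, ← Matrix.mul_assoc, hBE]
  rfl

lemma BK_mul_C_apply (L : LGains P) (k : Fin (N+1)) (a b : Idx P.nd) :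
    (BK P L * P.C) (k, a) b = -(L k * Cup P k) a b := by
  rw [Cup, ← padLe_transpose_mul, ← Matrix.mul_assoc]
  simp [BK, mul_apply]

lemma BK_mul_C_mulVec_apply (L : LGains P) (x : Idx P.nd → ℝ) (k : Fin (N+1)) (a : Idx P.nd) :
    ((BK P L * P.C) *ᵥ x) (k, a) = -((L k * Cup P k) *ᵥ x) a := by
  simp [mulVec, dotProduct, BK_mul_C_apply, Finset.sum_neg_distrib]

end ClosedLoop

section Collapse

variable {N : ℕ}

/-- `v ∘ collapse nd j = v` says that `v` lies in `𝒱_j`. -/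
def collapse (nd : Fin (N+1) → ℕ) (j : Fin (N+1)) : BigIx nd → BigIx nd :=
  Sum.elim (fun y => if j ≤ y.1 then Sum.inr y.2 else Sum.inl y) Sum.inr

variable {nd : Fin (N+1) → ℕ} {j : Fin (N+1)}

lemma collapse_collapse (x : BigIx nd) : collapse nd j (collapse nd j x) = collapse nd j x := by
  rcases x with ⟨k, a⟩ | a
  · by_cases h : j ≤ k <;> simp [collapse, h]
  · rfl

lemma comp_collapse_eq_iff {α : Type*} {v : BigIx nd → α} :
    v ∘ collapse nd j = v ↔ ∀ k, j ≤ k → ∀ a, v (Sum.inl (k, a)) = v (Sum.inr a) := by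
  refine ⟨fun h k hk a => by simpa [collapse, hk] using (congrFun h (Sum.inl (k, a))).symm,
    fun h => funext fun x => ?_⟩
  rcases x with ⟨k, a⟩ | a
  · by_cases hk : j ≤ k
    · simpa [collapse, hk] using (h k hk a).symm
    · simp [collapse, hk]
  · rfl

def collapseMatrix (nd : Fin (N+1) → ℕ) (j : Fin (N+1)) : Matrix (BigIx nd) (BigIx nd) ℝ :=
  (1 : Matrix (BigIx nd) (BigIx nd) ℝ).submatrix (collapse nd j) id

lemma collapseMatrix_mul {α : Type*} (M : Matrix (BigIx nd) α ℝ) :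
    collapseMatrix nd j * M = M.submatrix (collapse nd j) id := by
  ext x c
  simp [collapseMatrix, mul_apply, one_apply]

lemma col_collapseMatrix_comp_collapse (y : BigIx nd) :
    (fun x => collapseMatrix nd j x y) ∘ collapse nd j = fun x => collapseMatrix nd j x y := by
  funext x
  rw [Function.comp_apply, collapseMatrix, submatrix_apply, submatrix_apply, collapse_collapse]

lemma Tmat_mulVec_eq_zero {v : BigIx nd → ℝ} (hv : v ∘ collapse nd j = v) :
    Tmat nd j *ᵥ v = 0 := by
  funext a
  simp [mulVec, dotProduct, Tmat, Fintype.sum_sum_type, Fintype.sum_prod_type, ite_and,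
    comp_collapse_eq_iff.mp hv j le_rfl a]

lemma Tmat_mul_collapseMatrix : Tmat nd j * collapseMatrix nd j = 0 := by
  ext a y
  exact congrFun (Tmat_mulVec_eq_zero (col_collapseMatrix_comp_collapse y)) a

lemma collapseMatrix_mul_Lcal {N : ℕ} (P : Plant N) (L : LGains P) (j : Fin (N+1)) :
    collapseMatrix P.nd j * Lcal P L j = Lcal P L j := by
  rw [collapseMatrix_mul]
  ext (⟨k, a⟩ | a) c
  · by_cases hk : j ≤ k <;> simp [collapse, Lcal, hk]
  · rfl

end Collapse

section Invariance

variable {N : ℕ} (P : Plant N) (K : KGains P) (L : LGains P) (j : Fin (N+1))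

theorem Acal_mulVec_comp_collapse {v : BigIx P.nd → ℝ} (hv : v ∘ collapse P.nd j = v) :
    (Acal P K L *ᵥ v) ∘ collapse P.nd j = Acal P K L *ᵥ v := by
  rw [comp_collapse_eq_iff] at hv ⊢
  intro k hk a
  have hconst := IsConstFrom.zetaN_mul_blkDiagN_mul_inv_mulVec (ξ := v ∘ Sum.inl)
    (fun l hl b => (hv l hl b).trans (hv j le_rfl b).symm) (fun k => Bdown P k * K k)
  rw [Acal, fromBlocks_mulVec]
  simp only [Sum.elim_inl, Sum.elim_inr, Pi.add_apply, AK, add_mulVec, blkDiagN_mulVec_apply,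
    BK_mul_C_mulVec_apply, B_mul_CK]
  set Z := zetaN P.nd * blkDiagN (fun k => Bdown P k * K k) * (zetaN P.nd)⁻¹
  have hblock : (fun b => (v ∘ Sum.inl) (k, b)) = v ∘ Sum.inr := funext (hv k hk)
  have hlast : (Z.submatrix (fun a => (Fin.last N, a)) id *ᵥ v ∘ Sum.inl) a =
      (Z *ᵥ v ∘ Sum.inl) (Fin.last N, a) := rfl
  rw [hblock, hlast, hconst k hk, hconst _ (Fin.le_last j)]
  ring

theorem Acal_mul_collapseMatrix :
    Acal P K L * collapseMatrix P.nd j =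
      collapseMatrix P.nd j * (Acal P K L * collapseMatrix P.nd j) := by
  rw [collapseMatrix_mul]
  ext x y
  exact (congrFun (Acal_mulVec_comp_collapse P K L j (col_collapseMatrix_comp_collapse y)) x).symm

end Invariance

theorem stmt11_general {N : ℕ} (P : Plant N)
    (K : KGains P) (L : LGains P) (j : Fin (N+1))
    (s : ℂ) (hs : s ∉ spectrum ℂ (mc (Acal P K L))) :
    mc (Tmat P.nd j) * (s • 1 - mc (Acal P K L))⁻¹ * mc (Lcal P L j) = 0 := by
  set Q := collapseMatrix P.nd j
  have hunit : IsUnit (s • 1 - mc (Acal P K L)) := by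
    simpa [Algebra.algebraMap_eq_smul_one] using spectrum.notMem_iff.mp hs
  have hinvariant :
      (s • 1 - mc (Acal P K L)) * mc Q = mc Q * (s • 1 - mc (Acal P K L * Q)) := by
    rw [sub_mul, mul_sub, Matrix.smul_mul, Matrix.mul_smul, Matrix.one_mul, Matrix.mul_one,
      ← mc_mul, ← mc_mul, ← Acal_mul_collapseMatrix]
  obtain ⟨D, hD⟩ := Matrix.exists_nonsing_inv_mul_eq_mul hunit ⟨_, hinvariant⟩
  calc mc (Tmat P.nd j) * (s • 1 - mc (Acal P K L))⁻¹ * mc (Lcal P L j)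
      = mc (Tmat P.nd j) * ((s • 1 - mc (Acal P K L))⁻¹ * mc Q) * mc (Lcal P L j) := by
        rw [← Matrix.mul_assoc (mc (Tmat P.nd j)), Matrix.mul_assoc _ (mc Q), ← mc_mul,
          collapseMatrix_mul_Lcal]
    _ = 0 := by
        rw [hD, ← Matrix.mul_assoc, ← mc_mul, Tmat_mul_collapseMatrix]
        simp [mc]

/-- for arbitrary gains, `T_j (sI − 𝒜)⁻¹ ℒ_j = 0`: the transfer function
from the innovation channel `ℒ_j` to `x − x^{K_j}` vanishes identically (certainty
equivalence). -/
theorem stmt11 {N : ℕ} (P : Plant N)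
    (hdim : ∀ k : Fin (N+1), 0 < P.nd k ∧ 0 < P.md k ∧ 0 < P.pd k)
    (K : KGains P) (L : LGains P) (j : Fin (N+1))
    (s : ℂ) (hs : s ∉ spectrum ℂ (mc (Acal P K L))) :
    mc (Tmat P.nd j) * (s • 1 - mc (Acal P K L))⁻¹ * mc (Lcal P L j) = 0 :=
  stmt11_general P K L j s hs

end TriLQG
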